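/- Let g : ℝⁿ → ℝ be differentiable with L-Lipschitz gradient, h₁ : ℝⁿ → ℝ ∪ {+∞} a proper lower semicontinuous convex function, h₂ : ℝⁿ → ℝ a continuous convex function, f = g + h₁ − h₂. Let x, x⁺ ∈ ℝⁿ with h₁(x) and h₁(x⁺) finite, d = x⁺ − x, ξ ∈ ∂h₂(x), B a symmetric matrix with m‖u‖² ≤ uᵀBu for all u (m > 0), θ̄ ∈ (0,1], and suppose r ∈ ℝⁿ satisfies r − (∇g(x) − ξ) − B d ∈ ∂h₁(x⁺) and ‖r‖_{B⁻¹} ≤ (1 − θ̄)‖d‖_B. Then for every η ∈ (0,1], f(x + ηd) ≤ f(x) + η(ηL/(2m) − θ̄)‖d‖_B². In particular, f(x + ηd) ≤ f(x) whenever η < 2mθ̄/L. -/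

import Mathlib

/-!
Bound the three parts of `f` separately along the segment from `x` to `x⁺`. Convexity of `h₁`
together with the subgradient inclusion at `x⁺` gives
`h₁(x + ηd) ≤ h₁(x) + η⟪r - ∇g(x) + ξ - Bd, d⟫`; the subgradient `ξ` gives
`-h₂(x + ηd) ≤ -h₂(x) - η⟪ξ, d⟫`; and the descent lemma together with `m‖d‖² ≤ ‖d‖_B²` gives
`g(x + ηd) ≤ g(x) + η⟪∇g(x), d⟫ + η²L/(2m) ‖d‖_B²`. Summing, the `∇g(x)` and `ξ` terms cancel,
and Cauchy–Schwarz for the dual pair of norms, `⟪r, d⟫ ≤ ‖r‖_{B⁻¹} ‖d‖_B ≤ (1 - θ̄) ‖d‖_B²`,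
leaves `η(ηL/(2m) - θ̄) ‖d‖_B²`.
-/

open Matrix Filter Topology RealInnerProductSpace

noncomputable section

/-- `n`-dimensional Euclidean space. -/
abbrev Euc (n : ℕ) := EuclideanSpace ℝ (Fin n)

/-- `v` is a subgradient of the extended-real-valued convex function `φ` at `x`. -/
def ESubgradAt {n : ℕ} (φ : Euc n → EReal) (v x : Euc n) : Prop :=
  ∀ y : Euc n, φ x + ((⟪v, y - x⟫ : ℝ) : EReal) ≤ φ y

/-- `v` is a subgradient of the real-valued convex function `φ` at `x`. -/
def RSubgradAt {n : ℕ} (φ : Euc n → ℝ) (v x : Euc n) : Prop :=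
  ∀ y : Euc n, φ x + ⟪v, y - x⟫ ≤ φ y

/-- Convexity of an extended-real-valued function. -/
def EConvexF {n : ℕ} (φ : Euc n → EReal) : Prop :=
  ∀ x y : Euc n, ∀ a b : ℝ, 0 ≤ a → 0 ≤ b → a + b = 1 →
    φ (a • x + b • y) ≤ (a : EReal) * φ x + (b : EReal) * φ y

/-- Properness of an extended-real-valued function: never `⊥` and finite somewhere. -/
def ProperF {n : ℕ} (φ : Euc n → EReal) : Prop :=
  (∀ x, φ x ≠ ⊥) ∧ (∃ x, φ x ≠ ⊤)

/-- The quadratic form `uᵀ B u`. -/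
def quadF {n : ℕ} (B : Matrix (Fin n) (Fin n) ℝ) (u : Euc n) : ℝ :=
  ⟪u, (Matrix.toEuclideanLin B) u⟫

/-- The scaled norm `‖u‖_B = √(uᵀ B u)`. -/
def MNorm {n : ℕ} (B : Matrix (Fin n) (Fin n) ℝ) (u : Euc n) : ℝ :=
  Real.sqrt (quadF B u)

/-- The objective `f = g + h₁ - h₂`. -/
def fObj {n : ℕ} (g : Euc n → ℝ) (h₁ : Euc n → EReal) (h₂ : Euc n → ℝ) (x : Euc n) : EReal :=
  (g x : EReal) + h₁ x - (h₂ x : EReal)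

section InnerProductSpace

variable {E : Type*} [NormedAddCommGroup E] [InnerProductSpace ℝ E]

theorem LinearMap.IsPositive.inner_apply_sq_le {T : E →ₗ[ℝ] E} (hT : T.IsPositive) (u v : E) :
    ⟪T u, v⟫ ^ 2 ≤ ⟪T u, u⟫ * ⟪T v, v⟫ := by
  have hquad : ∀ t : ℝ, 0 ≤ ⟪T v, v⟫ * (t * t) + 2 * ⟪T u, v⟫ * t + ⟪T u, u⟫ := fun t ↦ by
    have h := hT.inner_nonneg_left (u + t • v)
    have hsymm : ⟪T v, u⟫ = ⟪T u, v⟫ := by rw [hT.isSymmetric, real_inner_comm]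
    simp only [map_add, map_smul, inner_add_left, inner_add_right, real_inner_smul_left,
      real_inner_smul_right, hsymm] at h
    linarith
  have := discrim_le_zero hquad
  rw [discrim] at this
  linarith

theorem le_add_inner_add_sq_of_lipschitz_gradient [CompleteSpace E] {f : E → ℝ} {f' : E → E}
    {L : ℝ} (hf : ∀ y, HasGradientAt f (f' y) y) (hLip : ∀ u v, ‖f' u - f' v‖ ≤ L * ‖u - v‖)
    (x d : E) : f (x + d) ≤ f x + ⟪f' x, d⟫ + L / 2 * ‖d‖ ^ 2 := by
  set φ : ℝ → ℝ := fun t ↦ f (x + t • d) - t * ⟪f' x, d⟫ - L / 2 * t ^ 2 * ‖d‖ ^ 2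
  have hφ : ∀ t, HasDerivAt φ (⟪f' (x + t • d) - f' x, d⟫ - L * t * ‖d‖ ^ 2) t := fun t ↦ by
    have hline : HasDerivAt (fun s : ℝ ↦ x + s • d) d t := by
      simpa using ((hasDerivAt_id t).smul_const d).const_add x
    have hfline := (hf (x + t • d)).hasFDerivAt.comp_hasDerivAt t hline
    simp only [Function.comp_def, InnerProductSpace.toDual_apply_apply] at hfline
    refine ((hfline.sub ((hasDerivAt_id t).mul_const ⟪f' x, d⟫)).sub
      (((hasDerivAt_pow 2 t).const_mul (L / 2)).mul_const (‖d‖ ^ 2))).congr_deriv ?_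
    rw [inner_sub_left]
    simp only [Nat.cast_ofNat]
    ring
  have hanti : AntitoneOn φ (Set.Icc 0 1) := by
    refine antitoneOn_of_hasDerivWithinAt_nonpos (convex_Icc 0 1)
      (fun t _ ↦ (hφ t).continuousAt.continuousWithinAt) (fun t _ ↦ (hφ t).hasDerivWithinAt) ?_
    intro t ht
    rw [interior_Icc] at ht
    have : ⟪f' (x + t • d) - f' x, d⟫ ≤ L * t * ‖d‖ ^ 2 :=
      calc ⟪f' (x + t • d) - f' x, d⟫ ≤ ‖f' (x + t • d) - f' x‖ * ‖d‖ := real_inner_le_norm _ _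
        _ ≤ L * ‖t • d‖ * ‖d‖ := by
          gcongr
          simpa using hLip (x + t • d) x
        _ = L * t * ‖d‖ ^ 2 := by rw [norm_smul, Real.norm_of_nonneg ht.1.le]; ring
    linarith
  have := hanti (Set.left_mem_Icc.2 zero_le_one) (Set.right_mem_Icc.2 zero_le_one) zero_le_one
  norm_num [φ] at this
  linarith

end InnerProductSpace

section ScaledNorm

variable {n : ℕ} {B : Matrix (Fin n) (Fin n) ℝ}

theorem quadF_nonneg_of_coercive {m : ℝ} (hm : 0 ≤ m)
    (hBlow : ∀ u : Euc n, m * ‖u‖ ^ 2 ≤ quadF B u) (u : Euc n) : 0 ≤ quadF B u :=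
  (by positivity : 0 ≤ m * ‖u‖ ^ 2).trans (hBlow u)

theorem isUnit_det_of_coercive {m : ℝ} (hm : 0 < m)
    (hBlow : ∀ u : Euc n, m * ‖u‖ ^ 2 ≤ quadF B u) : IsUnit B.det := by
  rw [← isUnit_iff_isUnit_det, ← mulVec_injective_iff_isUnit]
  intro v w hvw
  have h := hBlow (WithLp.toLp 2 (v - w))
  have hzero : quadF B (WithLp.toLp 2 (v - w)) = 0 := by simp [quadF, hvw]
  rw [hzero] at h
  have : ‖WithLp.toLp 2 (v - w)‖ ^ 2 ≤ 0 := nonpos_of_mul_nonpos_right h hm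
  simpa [sub_eq_zero] using this

theorem isPositive_toEuclideanLin (hB : B.IsSymm) (hq : ∀ u, 0 ≤ quadF B u) :
    (Matrix.toEuclideanLin B).IsPositive :=
  ⟨isSymmetric_toEuclideanLin_iff.2 (isHermitian_iff_isSelfAdjoint.2 hB), fun u ↦ by
    simpa [real_inner_comm, quadF] using hq u⟩

theorem inner_le_MNorm_inv_mul_MNorm (hB : B.IsSymm) (hq : ∀ u, 0 ≤ quadF B u)
    (hdet : IsUnit B.det) (r d : Euc n) : ⟪r, d⟫ ≤ MNorm B⁻¹ r * MNorm B d := by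
  have hT := isPositive_toEuclideanLin hB hq
  set T := Matrix.toEuclideanLin B
  set s := Matrix.toEuclideanLin B⁻¹ r
  have hs : T s = r := by
    rw [← LinearMap.comp_apply, ← Matrix.toLpLin_mul, Matrix.mul_nonsing_inv _ hdet]
    simp
  have hr : quadF B⁻¹ r = ⟪T s, s⟫ := by
    rw [hs]; rfl
  have hd : quadF B d = ⟪T d, d⟫ := real_inner_comm _ _
  calc ⟪r, d⟫ ≤ |⟪T s, d⟫| := hs ▸ le_abs_self _
    _ ≤ √(⟪T s, s⟫ * ⟪T d, d⟫) := Real.abs_le_sqrt (hT.inner_apply_sq_le s d)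
    _ = MNorm B⁻¹ r * MNorm B d := by
      rw [MNorm, MNorm, hr, hd, Real.sqrt_mul (hT.inner_nonneg_left s)]

end ScaledNorm

theorem EConvexF.le_add_mul_inner_of_subgrad {n : ℕ} {φ : Euc n → EReal} (hφ : EConvexF φ)
    {v x y : Euc n} (hv : ESubgradAt φ v y) {a b : ℝ} (hx : φ x = a) (hy : φ y = b) {t : ℝ}
    (ht0 : 0 ≤ t) (ht1 : t ≤ 1) : φ (x + t • (y - x)) ≤ ((a + t * ⟪v, y - x⟫ : ℝ) : EReal) := by
  have hconv := hφ x y (1 - t) t (by linarith) ht0 (by ring)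
  have hsub := hv x
  rw [hx, hy] at hconv hsub
  have hsub' : b - ⟪v, y - x⟫ ≤ a := by
    have : b + ⟪v, x - y⟫ ≤ a := by exact_mod_cast hsub
    rwa [← neg_sub y x, inner_neg_right, ← sub_eq_add_neg] at this
  calc φ (x + t • (y - x)) = φ ((1 - t) • x + t • y) := by congr 1; module
    _ ≤ ((1 - t) * a + t * b : ℝ) := by exact_mod_cast hconv
    _ ≤ _ := by
      rw [EReal.coe_le_coe_iff]
      linarith [mul_le_mul_of_nonneg_left hsub' ht0]

theorem fObj_eq_coe {n : ℕ} {g : Euc n → ℝ} {h₁ : Euc n → EReal} {h₂ : Euc n → ℝ} {y : Euc n}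
    {c : ℝ} (hc : h₁ y = c) : fObj g h₁ h₂ y = ((g y + c - h₂ y : ℝ) : EReal) := by
  rw [fObj, hc]
  norm_cast

theorem fObj_add_smul_le {n : ℕ} {L m θbar : ℝ} {g : Euc n → ℝ} {g' : Euc n → Euc n}
    {h₁ : Euc n → EReal} {h₂ : Euc n → ℝ} {x xp ξ r d : Euc n} {B : Matrix (Fin n) (Fin n) ℝ}
    (hL : 0 ≤ L) (hg : ∀ y : Euc n, HasGradientAt g (g' y) y)
    (hLip : ∀ u v : Euc n, ‖g' u - g' v‖ ≤ L * ‖u - v‖)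
    (hbot : ∀ y, h₁ y ≠ ⊥) (hconv : EConvexF h₁) (hfin : h₁ x ≠ ⊤) (hfinp : h₁ xp ≠ ⊤)
    (hd : d = xp - x) (hξ : RSubgradAt h₂ ξ x) (hBsymm : B.IsSymm) (hm : 0 < m)
    (hBlow : ∀ u : Euc n, m * ‖u‖ ^ 2 ≤ quadF B u)
    (hr : ESubgradAt h₁ (r - (g' x - ξ) - (Matrix.toEuclideanLin B) d) xp)
    (hres : MNorm B⁻¹ r ≤ (1 - θbar) * MNorm B d) {η : ℝ} (hη0 : 0 < η) (hη1 : η ≤ 1) :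
    fObj g h₁ h₂ (x + η • d) ≤
      fObj g h₁ h₂ x + ((η * (η * L / (2 * m) - θbar) * quadF B d : ℝ) : EReal) := by
  have hq := quadF_nonneg_of_coercive hm.le hBlow
  obtain ⟨a, ha⟩ : ∃ a : ℝ, h₁ x = a := ⟨_, (EReal.coe_toReal hfin (hbot x)).symm⟩
  obtain ⟨b, hb⟩ : ∃ b : ℝ, h₁ xp = b := ⟨_, (EReal.coe_toReal hfinp (hbot xp)).symm⟩
  have hh₁ := hconv.le_add_mul_inner_of_subgrad hr ha hb hη0.le hη1
  rw [← hd] at hh₁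
  obtain ⟨c, hc⟩ : ∃ c : ℝ, h₁ (x + η • d) = c :=
    ⟨_, (EReal.coe_toReal (ne_top_of_le_ne_top (EReal.coe_ne_top _) hh₁) (hbot _)).symm⟩
  rw [hc, EReal.coe_le_coe_iff] at hh₁
  have hh₂ := hξ (x + η • d)
  have hg_le := le_add_inner_add_sq_of_lipschitz_gradient hg hLip x (η • d)
  have hrd : ⟪r, d⟫ ≤ (1 - θbar) * quadF B d :=
    calc ⟪r, d⟫ ≤ MNorm B⁻¹ r * MNorm B d :=
          inner_le_MNorm_inv_mul_MNorm hBsymm hq (isUnit_det_of_coercive hm hBlow) r d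
      _ ≤ (1 - θbar) * MNorm B d * MNorm B d := by gcongr; exact Real.sqrt_nonneg _
      _ = (1 - θbar) * quadF B d := by rw [mul_assoc, MNorm, Real.mul_self_sqrt (hq d)]
  have hnorm : L / 2 * ‖η • d‖ ^ 2 ≤ η * (η * L / (2 * m)) * quadF B d :=
    calc L / 2 * ‖η • d‖ ^ 2 = η ^ 2 * L / (2 * m) * (m * ‖d‖ ^ 2) := by
          rw [norm_smul, Real.norm_of_nonneg hη0.le]; field_simp
      _ ≤ η ^ 2 * L / (2 * m) * quadF B d := by gcongr; exact hBlow d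
      _ = η * (η * L / (2 * m)) * quadF B d := by ring
  have hBdd : ⟪Matrix.toEuclideanLin B d, d⟫ = quadF B d := real_inner_comm _ _
  rw [fObj_eq_coe hc, fObj_eq_coe ha, ← EReal.coe_add, EReal.coe_le_coe_iff]
  simp only [add_sub_cancel_left, inner_smul_right, inner_sub_left, hBdd] at hh₁ hh₂ hg_le
  linarith [mul_le_mul_of_nonneg_left hrd hη0.le]

theorem descent_with_scaled_norm_general
    {n : ℕ} (L m θbar : ℝ)
    (g : Euc n → ℝ) (g' : Euc n → Euc n)
    (h₁ : Euc n → EReal) (h₂ : Euc n → ℝ)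
    (x xp ξ r d : Euc n) (B : Matrix (Fin n) (Fin n) ℝ)
    (hL : 0 ≤ L)
    (hg : ∀ y : Euc n, HasGradientAt g (g' y) y)
    (hLip : ∀ u v : Euc n, ‖g' u - g' v‖ ≤ L * ‖u - v‖)
    (hprop : ProperF h₁) (hconv : EConvexF h₁)
    (hfin : h₁ x ≠ ⊤) (hfinp : h₁ xp ≠ ⊤)
    (hd : d = xp - x)
    (hξ : RSubgradAt h₂ ξ x)
    (hBsymm : B.IsSymm)
    (hm : 0 < m)
    (hBlow : ∀ u : Euc n, m * ‖u‖ ^ 2 ≤ quadF B u)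
    (hr : ESubgradAt h₁ (r - (g' x - ξ) - (Matrix.toEuclideanLin B) d) xp)
    (hres : MNorm B⁻¹ r ≤ (1 - θbar) * MNorm B d) :
    ∀ η : ℝ, 0 < η → η ≤ 1 →
      (fObj g h₁ h₂ (x + η • d) ≤ fObj g h₁ h₂ x +
        ((η * (η * L / (2 * m) - θbar) * quadF B d : ℝ) : EReal)) ∧
      (η < 2 * m * θbar / L → fObj g h₁ h₂ (x + η • d) ≤ fObj g h₁ h₂ x) := by
  intro η hη0 hη1
  have hle := fObj_add_smul_le hL hg hLip hprop.1 hconv hfin hfinp hd hξ hBsymm hm hBlow hr hres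
    hη0 hη1
  refine ⟨hle, fun hlt ↦ hle.trans (add_le_of_nonpos_right ?_)⟩
  obtain rfl | hLpos := hL.eq_or_lt
  · rw [div_zero] at hlt
    exact absurd hlt hη0.not_gt
  have hcoef : η * L / (2 * m) - θbar ≤ 0 := by
    rw [sub_nonpos, div_le_iff₀ (by positivity)]
    linarith [(lt_div_iff₀ hLpos).1 hlt]
  exact_mod_cast mul_nonpos_of_nonpos_of_nonneg (mul_nonpos_of_nonneg_of_nonpos hη0.le hcoef)
    (quadF_nonneg_of_coercive hm.le hBlow d)

/-- `f(x + ηd) ≤ f(x) + η(ηL/(2m) - θ̄)‖d‖_B²` for `η ∈ (0,1]`; in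
particular `f(x + ηd) ≤ f(x)` whenever `η < 2mθ̄/L`. -/
theorem descent_with_scaled_norm
    {n : ℕ} (L m θbar : ℝ)
    (g : Euc n → ℝ) (g' : Euc n → Euc n)
    (h₁ : Euc n → EReal) (h₂ : Euc n → ℝ)
    (x xp ξ r d : Euc n) (B : Matrix (Fin n) (Fin n) ℝ)
    (hL : 0 ≤ L)
    (hg : ∀ y : Euc n, HasGradientAt g (g' y) y)
    (hLip : ∀ u v : Euc n, ‖g' u - g' v‖ ≤ L * ‖u - v‖)
    (hprop : ProperF h₁) (hlsc : LowerSemicontinuous h₁) (hconv : EConvexF h₁)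
    (hh₂cont : Continuous h₂) (hh₂conv : ConvexOn ℝ Set.univ h₂)
    (hfin : h₁ x ≠ ⊤) (hfinp : h₁ xp ≠ ⊤)
    (hd : d = xp - x)
    (hξ : RSubgradAt h₂ ξ x)
    (hBsymm : B.IsSymm)
    (hm : 0 < m)
    (hBlow : ∀ u : Euc n, m * ‖u‖ ^ 2 ≤ quadF B u)
    (hθbar0 : 0 < θbar) (hθbar1 : θbar ≤ 1)
    (hr : ESubgradAt h₁ (r - (g' x - ξ) - (Matrix.toEuclideanLin B) d) xp)
    (hres : MNorm B⁻¹ r ≤ (1 - θbar) * MNorm B d) :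
    ∀ η : ℝ, 0 < η → η ≤ 1 →
      (fObj g h₁ h₂ (x + η • d) ≤ fObj g h₁ h₂ x +
        ((η * (η * L / (2 * m) - θbar) * quadF B d : ℝ) : EReal)) ∧
      (η < 2 * m * θbar / L → fObj g h₁ h₂ (x + η • d) ≤ fObj g h₁ h₂ x) :=
  descent_with_scaled_norm_general L m θbar g g' h₁ h₂ x xp ξ r d B hL hg hLip hprop hconv hfin
    hfinp hd hξ hBsymm hm hBlow hr hres
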